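/- arXiv:2403.07106 — 5 statements merged into one kernel-verified Lean document; each statement's English description precedes it below -/
import Mathlib

section
/- The map θ ↦ exp(i t B · J_{n_θ}) (matrix exponential) is differentiable in θ, and its derivative V at θ satisfies i · V · exp(−i t B · J_{n_θ}) = 2 sin(Bt/2) · J_{n₁}. (This is the operator 𝓗_θ = i (∂_θ U†) U for the unitary encoding U = exp(−i t B J_{n_θ}).) -/
/-!
Conjugation by `exp (s • iJy)` rotates `Jx` into `cos s • Jx + sin s • Jz`, so
`J_{n_θ} = e^{iθJy} Jx e^{-iθJy}` and `U θ = exp (itB J_{n_θ}) = e^{iθJy} exp (itB Jx) e^{-iθJy}`.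
Hence `U' = [iJy, U]` and `i U' U⁻¹ = U Jy U⁻¹ - Jy`. Now `U Jy U⁻¹` is `Jy` rotated by the
angle `tB` about the unit axis `n_θ`, namely `cos (tB) Jy + sin (tB) (sin θ Jx - cos θ Jz)`, and
the double-angle formulas turn `U Jy U⁻¹ - Jy` into `2 sin (Bt/2) J_{n₁}`.
-/

open NormedSpace
open Complex (I)

section RationalBanachAlgebra

variable {𝔸 : Type*} [NormedRing 𝔸] [NormedAlgebra ℚ 𝔸] [CompleteSpace 𝔸]

theorem NormedSpace.exp_mul_exp_neg (x : 𝔸) : exp x * exp (-x) = 1 := by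
  rw [← exp_add_of_commute (Commute.refl x).neg_right, add_neg_cancel, exp_zero]

theorem NormedSpace.exp_neg_mul_exp (x : 𝔸) : exp (-x) * exp x = 1 := by
  rw [← exp_add_of_commute (Commute.refl x).neg_left, neg_add_cancel, exp_zero]

theorem NormedSpace.exp_exp_mul_mul_exp_neg (a x : 𝔸) :
    exp (exp a * x * exp (-a)) = exp a * exp x * exp (-a) :=
  exp_units_conj ⟨exp a, exp (-a), exp_mul_exp_neg a, exp_neg_mul_exp a⟩ x

end RationalBanachAlgebra

section RealBanachAlgebra

variable {𝔸 : Type*} [NormedRing 𝔸] [NormedAlgebra ℝ 𝔸] [CompleteSpace 𝔸]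

theorem hasDerivAt_exp_smul_mul_mul_exp_neg_smul (K M : 𝔸) (u : ℝ) :
    HasDerivAt (fun v : ℝ => exp (v • K) * M * exp (-(v • K)))
      (K * (exp (u • K) * M * exp (-(u • K))) - exp (u • K) * M * exp (-(u • K)) * K) u := by
  have hneg : HasDerivAt (fun v : ℝ => exp (-(v • K))) (exp (-(u • K)) * -K) u := by
    simpa only [smul_neg] using hasDerivAt_exp_smul_const (-K) u
  exact (((hasDerivAt_exp_smul_const' K u).mul_const M).mul hneg).congr_deriv (by noncomm_ring)

theorem exp_smul_mul_mul_exp_neg_smul_of_commutator_eq {A Y Z : 𝔸} (hY : A * Y - Y * A = Z)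
    (hZ : A * Z - Z * A = -Y) (s : ℝ) :
    exp (s • A) * Y * exp (-(s • A)) = Real.cos s • Y + Real.sin s • Z := by
  let +nondep : NormedAlgebra ℚ 𝔸 := .restrictScalars ℚ ℝ 𝔸
  set C : ℝ → 𝔸 := fun v => Real.cos v • Y + Real.sin v • Z
  have hC : ∀ v, HasDerivAt C (-Real.sin v • Y + Real.cos v • Z) v := fun v =>
    ((Real.hasDerivAt_cos v).smul_const Y).add ((Real.hasDerivAt_sin v).smul_const Z)
  have hAC : ∀ v, A * C v - C v * A = -Real.sin v • Y + Real.cos v • Z := fun v => by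
    calc A * C v - C v * A = Real.cos v • (A * Y - Y * A) + Real.sin v • (A * Z - Z * A) := by
          simp only [C, mul_add, add_mul, mul_smul_comm, smul_mul_assoc, smul_sub]; abel
      _ = _ := by rw [hY, hZ]; module
  have hconst : ∀ v, HasDerivAt (fun v => exp (-(v • A)) * C v * exp (v • A)) 0 v := fun v => by
    have hneg : HasDerivAt (fun v : ℝ => exp (-(v • A))) (exp (-(v • A)) * -A) v := by
      simpa only [smul_neg] using hasDerivAt_exp_smul_const (-A) v
    refine ((hneg.mul (hC v)).mul (hasDerivAt_exp_smul_const' A v)).congr_deriv ?_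
    rw [Pi.mul_apply, ← hAC]
    noncomm_ring
  have hY : exp (-(s • A)) * C s * exp (s • A) = Y := by
    simpa [C] using is_const_of_deriv_eq_zero (fun v => (hconst v).differentiableAt)
      (fun v => (hconst v).deriv) s 0
  calc exp (s • A) * Y * exp (-(s • A))
      = (exp (s • A) * exp (-(s • A))) * C s * (exp (s • A) * exp (-(s • A))) := by
        rw [← hY]; noncomm_ring
    _ = C s := by rw [exp_mul_exp_neg, one_mul, mul_one]

end RealBanachAlgebra

theorem Real.cos_two_mul_smul_add_sin_two_mul_smul_sub {M : Type*} [AddCommGroup M] [Module ℝ M]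
    (x : ℝ) (Y Z : M) :
    Real.cos (2 * x) • Y + Real.sin (2 * x) • Z - Y
      = (2 * Real.sin x) • (Real.cos x • Z - Real.sin x • Y) := by
  rw [Real.cos_two_mul, Real.cos_sq', Real.sin_two_mul]
  module

theorem I_smul_commutator_I_smul_mul_of_mul_eq_one {R : Type*} [Ring R] [Algebra ℂ R] {u v : R}
    (huv : u * v = 1) (y : R) : I • ((I • y * u - u * (I • y)) * v) = u * y * v - y := by
  rw [sub_mul, mul_assoc, huv, mul_one, mul_smul_comm, smul_mul_assoc]
  linear_combination (norm := module) Complex.I_sq • (y - u * y * v)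

-- Matrices carry no global norm; this choice only supplies the Banach algebra structure, and
-- neither `exp` nor the entrywise derivatives depend on it.
attribute [local instance] Matrix.linftyOpNormedRing Matrix.linftyOpNormedAlgebra

theorem HasDerivAt.matrix_apply {n : Type*} [Fintype n] [DecidableEq n]
    {f : ℝ → Matrix n n ℂ} {f' : Matrix n n ℂ} {x : ℝ} (h : HasDerivAt f f' x) (i j : n) :
    HasDerivAt (fun y => f y i j) (f' i j) x :=
  (Matrix.entryLinearMap ℝ ℂ i j).toContinuousLinearMap.hasFDerivAt.comp_hasDerivAt x h

namespace Su2

variable {n : Type*} [Fintype n] [DecidableEq n] {Jx Jy Jz : Matrix n n ℂ}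

theorem rotate_Jx_about_Jy (hxy : Jx * Jy - Jy * Jx = I • Jz)
    (hyz : Jy * Jz - Jz * Jy = I • Jx) (s : ℝ) :
    exp (s • (I • Jy)) * Jx * exp (-(s • (I • Jy))) = Real.cos s • Jx + Real.sin s • Jz := by
  refine exp_smul_mul_mul_exp_neg_smul_of_commutator_eq ?_ ?_ s
  · simp only [smul_mul_assoc, mul_smul_comm]
    linear_combination (norm := module) -I • hxy - Complex.I_sq • Jz
  · simp only [smul_mul_assoc, mul_smul_comm]
    linear_combination (norm := module) I • hyz + Complex.I_sq • Jx

theorem exp_xz_axis_eq_conj (hxy : Jx * Jy - Jy * Jx = I • Jz)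
    (hyz : Jy * Jz - Jz * Jy = I • Jx) (r θ : ℝ) :
    exp (r • (I • (Real.cos θ • Jx + Real.sin θ • Jz)))
      = exp (θ • (I • Jy)) * exp (r • (I • Jx)) * exp (-(θ • (I • Jy))) := by
  calc _ = exp (exp (θ • (I • Jy)) * (r • (I • Jx)) * exp (-(θ • (I • Jy)))) := by
        rw [← rotate_Jx_about_Jy hxy hyz]
        simp only [mul_smul_comm, smul_mul_assoc]
    _ = _ := exp_exp_mul_mul_exp_neg _ _

theorem rotate_Jy_about_xz_axis (hxy : Jx * Jy - Jy * Jx = I • Jz)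
    (hyz : Jy * Jz - Jz * Jy = I • Jx) (hzx : Jz * Jx - Jx * Jz = I • Jy) {c s : ℝ}
    (hcs : c ^ 2 + s ^ 2 = 1) (r : ℝ) :
    exp (r • (I • (c • Jx + s • Jz))) * Jy * exp (-(r • (I • (c • Jx + s • Jz))))
      = Real.cos r • Jy + Real.sin r • (s • Jx - c • Jz) := by
  have hI : I ^ 2 = -1 := Complex.I_sq
  have hcs' : (c : ℂ) ^ 2 + (s : ℂ) ^ 2 = 1 := by exact_mod_cast hcs
  refine exp_smul_mul_mul_exp_neg_smul_of_commutator_eq ?_ ?_ r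
  · simp only [smul_mul_assoc, mul_smul_comm, add_mul, mul_add]
    linear_combination (norm := skip) (I * c) • hxy - (I * s) • hyz
    match_scalars <;> push_cast [Complex.coe_algebraMap] <;> grind
  · simp only [smul_mul_assoc, mul_smul_comm, add_mul, mul_add, sub_mul, mul_sub]
    linear_combination (norm := skip) I • hzx
    match_scalars <;> push_cast [Complex.coe_algebraMap] <;> grind

end Su2

theorem su2_H_theta_closed_form_general
    (N : ℕ)
    (Jx Jy Jz : Matrix (Fin N) (Fin N) ℂ)
    (hxy : Jx * Jy - Jy * Jx = Complex.I • Jz)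
    (hyz : Jy * Jz - Jz * Jy = Complex.I • Jx)
    (hzx : Jz * Jx - Jx * Jz = Complex.I • Jy)
    (J : (Fin 3 → ℝ) → Matrix (Fin N) (Fin N) ℂ)
    (hJ : ∀ v : Fin 3 → ℝ, J v = (v 0 : ℂ) • Jx + (v 1 : ℂ) • Jy + (v 2 : ℂ) • Jz)
    (B θ t : ℝ) :
    ∃ V : Matrix (Fin N) (Fin N) ℂ,
      (∀ i j : Fin N,
        HasDerivAt
          (fun θ' : ℝ =>
            NormedSpace.exp
              ((Complex.I * (t : ℂ) * (B : ℂ)) • J ![Real.cos θ', 0, Real.sin θ']) i j)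
          (V i j) θ)
      ∧ Complex.I •
          (V * NormedSpace.exp
              (-((Complex.I * (t : ℂ) * (B : ℂ)) • J ![Real.cos θ, 0, Real.sin θ])))
        = ((2 * Real.sin (B * t / 2) : ℝ) : ℂ) •
            J ![Real.cos (B * t / 2) * Real.sin θ, -Real.sin (B * t / 2),
                -(Real.cos (B * t / 2) * Real.cos θ)] := by
  have hJv : ∀ a b c : ℝ, J ![a, b, c] = a • Jx + b • Jy + c • Jz := fun a b c => by
    simp only [hJ, Complex.coe_smul, Matrix.cons_val_zero, Matrix.cons_val_one, Matrix.cons_val]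
  have hexponent : ∀ θ', (I * t * B) • J ![Real.cos θ', 0, Real.sin θ']
      = (t * B) • (I • (Real.cos θ' • Jx + Real.sin θ' • Jz)) := fun θ' => by
    rw [show (I * t * B : ℂ) = ((t * B : ℝ) : ℂ) * I by push_cast; ring, mul_smul,
      Complex.coe_smul, hJv, zero_smul, add_zero]
  set X := (I * t * B) • J ![Real.cos θ, 0, Real.sin θ] with hX
  have hderiv : HasDerivAt (fun θ' => exp ((I * t * B) • J ![Real.cos θ', 0, Real.sin θ']))
      (I • Jy * exp X - exp X * (I • Jy)) θ := by
    simp only [hX, hexponent, Su2.exp_xz_axis_eq_conj hxy hyz]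
    exact hasDerivAt_exp_smul_mul_mul_exp_neg_smul _ _ θ
  refine ⟨_, hderiv.matrix_apply, ?_⟩
  calc I • ((I • Jy * exp X - exp X * (I • Jy)) * exp (-X))
      = exp X * Jy * exp (-X) - Jy :=
        I_smul_commutator_I_smul_mul_of_mul_eq_one (exp_mul_exp_neg X) Jy
    _ = Real.cos (t * B) • Jy + Real.sin (t * B) • (Real.sin θ • Jx - Real.cos θ • Jz) - Jy := by
        rw [hX, hexponent θ, Su2.rotate_Jy_about_xz_axis hxy hyz hzx (Real.cos_sq_add_sin_sq θ)]
    _ = _ := by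
        rw [show t * B = 2 * (B * t / 2) by ring, Real.cos_two_mul_smul_add_sin_two_mul_smul_sub,
          Complex.coe_smul, hJv]
        module

/-- The map `θ ↦ exp(itB J_{n_θ})` is differentiable (entrywise in the matrix,
equivalently in any matrix norm since the space is finite dimensional), and its
derivative `V` satisfies `i • (V * exp(−itB J_{n_θ})) = 2 sin(Bt/2) • J_{n₁}`,
i.e. `𝓗_θ = i (∂_θ U†) U` for `U = exp(−itB J_{n_θ})`. -/
theorem su2_H_theta_closed_form
    (N : ℕ) (hN : 0 < N)
    (Jx Jy Jz : Matrix (Fin N) (Fin N) ℂ)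
    (hxy : Jx * Jy - Jy * Jx = Complex.I • Jz)
    (hyz : Jy * Jz - Jz * Jy = Complex.I • Jx)
    (hzx : Jz * Jx - Jx * Jz = Complex.I • Jy)
    (J : (Fin 3 → ℝ) → Matrix (Fin N) (Fin N) ℂ)
    (hJ : ∀ v : Fin 3 → ℝ, J v = (v 0 : ℂ) • Jx + (v 1 : ℂ) • Jy + (v 2 : ℂ) • Jz)
    (B θ t : ℝ) :
    ∃ V : Matrix (Fin N) (Fin N) ℂ,
      (∀ i j : Fin N,
        HasDerivAt
          (fun θ' : ℝ =>
            NormedSpace.exp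
              ((Complex.I * (t : ℂ) * (B : ℂ)) • J ![Real.cos θ', 0, Real.sin θ']) i j)
          (V i j) θ)
      ∧ Complex.I •
          (V * NormedSpace.exp
              (-((Complex.I * (t : ℂ) * (B : ℂ)) • J ![Real.cos θ, 0, Real.sin θ])))
        = ((2 * Real.sin (B * t / 2) : ℝ) : ℂ) •
            J ![Real.cos (B * t / 2) * Real.sin θ, -Real.sin (B * t / 2),
                -(Real.cos (B * t / 2) * Real.cos θ)] :=
  su2_H_theta_closed_form_general N Jx Jy Jz hxy hyz hzx J hJ B θ t
end

section
/- Let ψ ∈ ℂ² be a unit vector, set 𝓗_B = −t J_{n_θ}, 𝓗_θ = 2 sin(Bt/2) J_{n₁}, and define the 2×2 real matrices Q with entries Q_{ll'} = 2⟨ψ|{𝓗_l, 𝓗_{l'}}|ψ⟩ − 4⟨ψ|𝓗_l|ψ⟩⟨ψ|𝓗_{l'}|ψ⟩ (l, l' ∈ {B,θ}) and D with entries D_{ll'} = −2i⟨ψ|[𝓗_l, 𝓗_{l'}]|ψ⟩. Then det Q = det D. (Hence whenever Q is invertible, the asymptotic incompatibility measure √(det D/det Q) equals 1: the two-parameter spin-1/2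 model is maximally incompatible for every pure probe state.) -/
open Matrix
open scoped BigOperators


private lemma expect_aux (ψ : Fin 2 → ℂ) (M : Matrix (Fin 2) (Fin 2) ℂ) :
    star ψ ⬝ᵥ (M *ᵥ ψ) =
      (starRingEnd ℂ) (ψ 0) * (M 0 0 * ψ 0 + M 0 1 * ψ 1)
        + (starRingEnd ℂ) (ψ 1) * (M 1 0 * ψ 0 + M 1 1 * ψ 1) := by
  simp [Matrix.mulVec, dotProduct, Fin.sum_univ_two, mul_add]

/-- For a qubit probe `ψ` in the two-parameter su(2) model with `𝓗_B = −t J_{n_θ}` and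
`𝓗_θ = 2 sin(Bt/2) J_{n₁}`, the QFIM `Q` and Uhlmann matrix `D` satisfy `det Q = det D`:
the two-parameter spin-1/2 model is maximally incompatible for every pure probe. -/
theorem qubit_two_param_detQ_eq_detD
    (σx σy σz : Matrix (Fin 2) (Fin 2) ℂ)
    (hσx : σx = !![0, 1; 1, 0])
    (hσy : σy = !![0, -Complex.I; Complex.I, 0])
    (hσz : σz = !![1, 0; 0, -1])
    (J : (Fin 3 → ℝ) → Matrix (Fin 2) (Fin 2) ℂ)
    (hJ : ∀ v : Fin 3 → ℝ,
      J v = (v 0 / 2 : ℂ) • σx + (v 1 / 2 : ℂ) • σy + (v 2 / 2 : ℂ) • σz)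
    (ψ : Fin 2 → ℂ) (hψ : star ψ ⬝ᵥ ψ = 1)
    (B θ t : ℝ)
    (H : Fin 2 → Matrix (Fin 2) (Fin 2) ℂ)
    (hH0 : H 0 = ((-t : ℝ) : ℂ) • J ![Real.cos θ, 0, Real.sin θ])
    (hH1 : H 1 = ((2 * Real.sin (B * t / 2) : ℝ) : ℂ) •
      J ![Real.cos (B * t / 2) * Real.sin θ, -Real.sin (B * t / 2),
          -(Real.cos (B * t / 2) * Real.cos θ)])
    (Q D : Matrix (Fin 2) (Fin 2) ℝ)
    (hQ : ∀ l l' : Fin 2, (Q l l' : ℂ) =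
      2 * (star ψ ⬝ᵥ ((H l * H l' + H l' * H l) *ᵥ ψ))
        - 4 * (star ψ ⬝ᵥ (H l *ᵥ ψ)) * (star ψ ⬝ᵥ (H l' *ᵥ ψ)))
    (hD : ∀ l l' : Fin 2, (D l l' : ℂ) =
      -2 * Complex.I * (star ψ ⬝ᵥ ((H l * H l' - H l' * H l) *ᵥ ψ))) :
    Q.det = D.det := by

  have hψ' : (starRingEnd ℂ) (ψ 0) * ψ 0 + (starRingEnd ℂ) (ψ 1) * ψ 1 = 1 := by
    simpa [dotProduct, Fin.sum_univ_two] using hψ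
  set a := ψ 0 with ha
  set b := ψ 1 with hb
  set ca := (starRingEnd ℂ) (ψ 0) with hca
  set cb := (starRingEnd ℂ) (ψ 1) with hcb
  set ct := ((Real.cos θ : ℝ) : ℂ) with hct
  set st := ((Real.sin θ : ℝ) : ℂ) with hst
  set cc := ((Real.cos (B * t / 2) : ℝ) : ℂ) with hcc
  set sc := ((Real.sin (B * t / 2) : ℝ) : ℂ) with hsc
  set T := ((t : ℝ) : ℂ) with hT
  have h0 : H 0 = !![-T*st/2, -T*ct/2; -T*ct/2, T*st/2] := by
    rw [hH0, hJ, hσx, hσy, hσz]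
    ext i j
    fin_cases i <;> fin_cases j <;>
      simp [Matrix.vecHead, Matrix.vecTail, hct, hst, hT] <;> push_cast <;> ring
  have h1 : H 1 = !![-(sc*cc*ct), sc*cc*st + sc*sc*Complex.I;
                     sc*cc*st - sc*sc*Complex.I, sc*cc*ct] := by
    rw [hH1, hJ, hσx, hσy, hσz]
    ext i j
    fin_cases i <;> fin_cases j <;>
      simp [Matrix.vecHead, Matrix.vecTail, hct, hst, hcc, hsc] <;> push_cast <;> ring
  have key : ((Q.det : ℝ) : ℂ) = ((D.det : ℝ) : ℂ) := by
    rw [Matrix.det_fin_two, Matrix.det_fin_two]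
    push_cast
    rw [hQ 0 0, hQ 1 1, hQ 0 1, hQ 1 0, hD 0 0, hD 1 1, hD 0 1, hD 1 0]
    rw [h0, h1]
    simp only [expect_aux, Matrix.mul_apply, Fin.sum_univ_two, Matrix.add_apply,
      Matrix.sub_apply, Matrix.cons_val', Matrix.cons_val_zero, Matrix.cons_val_one,
      Matrix.head_cons, Matrix.empty_val', Matrix.cons_val_fin_one, Matrix.head_fin_const,
      Matrix.of_apply, ← ha, ← hb, ← hca, ← hcb]
    linear_combination (-4*b^2*cb^2*st^2*sc^4*T^2 + -4*b^2*cb^2*st^4*cc^2*sc^2*T^2 + -8*b^2*cb^2*ct^2*st^2*cc^2*sc^2*T^2 + -4*b^2*cb^2*ct^4*cc^2*sc^2*T^2 + 8*b^2*ca*cb*ct*st*sc^4*T^2 + -8*b^2*ca*cb*ct*st^2*cc*sc^3*T^2*Complex.I + -8*b^2*ca*cb*ct^3*cc*sc^3*T^2*Complex.I + 4*b^2*ca^2*st^2*sc^4*T^2 + -8*b^2*ca^2*st^3*cc*sc^3*T^2*Complex.I + -4*b^2*ca^2*st^4*cc^2*sc^2*T^2 + -8*b^2*ca^2*ct^2*st*cc*sc^3*T^2*Complex.I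 + -8*b^2*ca^2*ct^2*st^2*cc^2*sc^2*T^2 + -4*b^2*ca^2*ct^4*cc^2*sc^2*T^2 + 8*a*b*cb^2*ct*st*sc^4*T^2 + 8*a*b*cb^2*ct*st^2*cc*sc^3*T^2*Complex.I + 8*a*b*cb^2*ct^3*cc*sc^3*T^2*Complex.I + -16*a*b*ca*cb*ct^2*sc^4*T^2 + -8*a*b*ca^2*ct*st*sc^4*T^2 + 8*a*b*ca^2*ct*st^2*cc*sc^3*T^2*Complex.I + 8*a*b*ca^2*ct^3*cc*sc^3*T^2*Complex.I + 4*a^2*cb^2*st^2*sc^4*T^2 + 8*a^2*cb^2*st^3*cc*sc^3*T^2*Complex.I + -4*a^2*cb^2*st^4*cc^2*sc^2*T^2 + 8*a^2*cb^2*ct^2*st*cc*sc^3*T^2*Complex.I + -8*a^2*cb^2*ct^2*st^2*cc^2*sc^2*T^2 + -4*a^2*cb^2*ct^4*cc^2*sc^2*T^2 + -8*a^2*ca*cb*ct*st*sc^4*T^2 + -8*a^2*ca*cb*ct*st^2*cc*sc^3*T^2*Complex.I + -8*a^2*ca*cb*ct^3*cc*sc^3*T^2*Complex.I + -4*a^2*ca^2*st^2*sc^4*T^2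 + -4*a^2*ca^2*st^4*cc^2*sc^2*T^2 + -8*a^2*ca^2*ct^2*st^2*cc^2*sc^2*T^2 + -4*a^2*ca^2*ct^4*cc^2*sc^2*T^2) * hψ' + (-4*b^2*cb^2*st^2*sc^4*T^2 + -4*b^2*cb^2*ct^2*sc^4*T^2*Complex.I^2 + 8*b^2*ca*cb*ct*st*sc^4*T^2 + -8*b^2*ca*cb*ct*st*sc^4*T^2*Complex.I^2 + -8*b^2*ca*cb*ct*st^2*cc*sc^3*T^2*Complex.I + -8*b^2*ca*cb*ct^3*cc*sc^3*T^2*Complex.I + 4*b^2*ca^2*st^2*sc^4*T^2 + -4*b^2*ca^2*st^2*sc^4*T^2*Complex.I^2 + -8*b^2*ca^2*st^3*cc*sc^3*T^2*Complex.I + -4*b^2*ca^2*st^4*cc^2*sc^2*T^2 + -8*b^2*ca^2*ct^2*st*cc*sc^3*T^2*Complex.I + -8*b^2*ca^2*ct^2*st^2*cc^2*sc^2*T^2 + -4*b^2*ca^2*ct^4*cc^2*sc^2*T^2 + 4*b^3*cb^3*st^2*sc^4*T^2 + -8*b^3*ca*cb^2*ct*st*sc^4*T^2 + -4*b^3*ca^2*cb*st^2*sc^4*T^2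 + 8*a*b*cb^2*ct*st*sc^4*T^2 + -8*a*b*cb^2*ct*st*sc^4*T^2*Complex.I^2 + 8*a*b*cb^2*ct*st^2*cc*sc^3*T^2*Complex.I + 8*a*b*cb^2*ct^3*cc*sc^3*T^2*Complex.I + -8*a*b*ca*cb*st^2*sc^4*T^2*Complex.I^2 + 8*a*b*ca*cb*st^4*cc^2*sc^2*T^2 + -16*a*b*ca*cb*ct^2*sc^4*T^2 + 8*a*b*ca*cb*ct^2*sc^4*T^2*Complex.I^2 + 16*a*b*ca*cb*ct^2*st^2*cc^2*sc^2*T^2 + 8*a*b*ca*cb*ct^4*cc^2*sc^2*T^2 + -8*a*b*ca^2*ct*st*sc^4*T^2 + 8*a*b*ca^2*ct*st*sc^4*T^2*Complex.I^2 + 8*a*b*ca^2*ct*st^2*cc*sc^3*T^2*Complex.I + 8*a*b*ca^2*ct^3*cc*sc^3*T^2*Complex.I + -8*a*b^2*cb^3*ct*st*sc^4*T^2 + 4*a*b^2*ca*cb^2*st^2*sc^4*T^2 + 16*a*b^2*ca*cb^2*ct^2*sc^4*T^2 + -4*a*b^2*ca^3*st^2*sc^4*T^2 + 4*a^2*cb^2*st^2*sc^4*T^2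 + -4*a^2*cb^2*st^2*sc^4*T^2*Complex.I^2 + 8*a^2*cb^2*st^3*cc*sc^3*T^2*Complex.I + -4*a^2*cb^2*st^4*cc^2*sc^2*T^2 + 8*a^2*cb^2*ct^2*st*cc*sc^3*T^2*Complex.I + -8*a^2*cb^2*ct^2*st^2*cc^2*sc^2*T^2 + -4*a^2*cb^2*ct^4*cc^2*sc^2*T^2 + -8*a^2*ca*cb*ct*st*sc^4*T^2 + 8*a^2*ca*cb*ct*st*sc^4*T^2*Complex.I^2 + -8*a^2*ca*cb*ct*st^2*cc*sc^3*T^2*Complex.I + -8*a^2*ca*cb*ct^3*cc*sc^3*T^2*Complex.I + -4*a^2*ca^2*st^2*sc^4*T^2 + -4*a^2*ca^2*ct^2*sc^4*T^2*Complex.I^2 + -4*a^2*b*cb^3*st^2*sc^4*T^2 + 4*a^2*b*ca^2*cb*st^2*sc^4*T^2 + 16*a^2*b*ca^2*cb*ct^2*sc^4*T^2 + 8*a^2*b*ca^3*ct*st*sc^4*T^2 + -4*a^3*ca*cb^2*st^2*sc^4*T^2 + 8*a^3*ca^2*cb*ct*st*sc^4*T^2 + 4*a^3*ca^3*st^2*sc^4*T^2)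 * Complex.I_sq
  exact_mod_cast key
end

section
/- Let ψ ∈ ℂ² be any unit vector and set 𝓗_B = −t J_{n_θ^{(3)}}, 𝓗_θ = 2 sin(Bt/2) J_{n₁^{(3)}}, 𝓗_φ = 2 sin(Bt/2) cosθ · J_{n₂^{(3)}}. Then the 3×3 real matrix Q with entries Q_{ll'} = 2⟨ψ|{𝓗_l, 𝓗_{l'}}|ψ⟩ − 4⟨ψ|𝓗_l|ψ⟩⟨ψ|𝓗_{l'}|ψ⟩, for l, l' ∈ {B, θ, φ}, satisfies det Q = 0. (For a qubit probe, the three-parameter su(2) quantum Fisher information matrix is always singular, so the three parameters cannot be estimated simultaneously.) -/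
open Matrix
open scoped BigOperators

/-- For a qubit probe, the three-parameter su(2) quantum Fisher information matrix is
always singular: with `𝓗_B = −t J_{n_θ³}`, `𝓗_θ = 2 sin(Bt/2) J_{n₁³}`,
`𝓗_φ = 2 sin(Bt/2) cos θ J_{n₂³}`, the 3×3 matrix
`Q_{ll'} = 2⟨{𝓗_l,𝓗_{l'}}⟩ − 4⟨𝓗_l⟩⟨𝓗_{l'}⟩` has `det Q = 0`. -/
theorem qubit_three_param_qfim_singular
    (σx σy σz : Matrix (Fin 2) (Fin 2) ℂ)
    (hσx : σx = !![0, 1; 1, 0])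
    (hσy : σy = !![0, -Complex.I; Complex.I, 0])
    (hσz : σz = !![1, 0; 0, -1])
    (J : (Fin 3 → ℝ) → Matrix (Fin 2) (Fin 2) ℂ)
    (hJ : ∀ v : Fin 3 → ℝ,
      J v = (v 0 / 2 : ℂ) • σx + (v 1 / 2 : ℂ) • σy + (v 2 / 2 : ℂ) • σz)
    (ψ : Fin 2 → ℂ) (hψ : star ψ ⬝ᵥ ψ = 1)
    (B θ φ t : ℝ)
    (H : Fin 3 → Matrix (Fin 2) (Fin 2) ℂ)
    (hH0 : H 0 = ((-t : ℝ) : ℂ) •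
      J ![Real.cos θ * Real.cos φ, Real.cos θ * Real.sin φ, Real.sin θ])
    (hH1 : H 1 = ((2 * Real.sin (B * t / 2) : ℝ) : ℂ) •
      J ![Real.sin (B * t / 2) * Real.sin φ + Real.cos (B * t / 2) * Real.sin θ * Real.cos φ,
          -(Real.sin (B * t / 2) * Real.cos φ) + Real.cos (B * t / 2) * Real.sin θ * Real.sin φ,
          -(Real.cos (B * t / 2) * Real.cos θ)])
    (hH2 : H 2 = ((2 * Real.sin (B * t / 2) * Real.cos θ : ℝ) : ℂ) •
      J ![Real.cos (B * t / 2) * Real.sin φ - Real.sin (B * t / 2) * Real.sin θ * Real.cos φ,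
          -(Real.cos (B * t / 2) * Real.cos φ) - Real.sin (B * t / 2) * Real.sin θ * Real.sin φ,
          Real.sin (B * t / 2) * Real.cos θ])
    (Q : Matrix (Fin 3) (Fin 3) ℝ)
    (hQ : ∀ l l' : Fin 3, (Q l l' : ℂ) =
      2 * (star ψ ⬝ᵥ ((H l * H l' + H l' * H l) *ᵥ ψ))
        - 4 * (star ψ ⬝ᵥ (H l *ᵥ ψ)) * (star ψ ⬝ᵥ (H l' *ᵥ ψ))) :
    Q.det = 0 := by
  classical
  have hψ' : (starRingEnd ℂ) (ψ 0) * ψ 0 + (starRingEnd ℂ) (ψ 1) * ψ 1 = 1 := by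
    simpa [dotProduct, Fin.sum_univ_two] using hψ
  -- Bloch vector (complex form)
  set ρ : Fin 3 → ℂ :=
    ![(starRingEnd ℂ) (ψ 0) * ψ 1 + (starRingEnd ℂ) (ψ 1) * ψ 0,
      -Complex.I * (starRingEnd ℂ) (ψ 0) * ψ 1 + Complex.I * (starRingEnd ℂ) (ψ 1) * ψ 0,
      (starRingEnd ℂ) (ψ 0) * ψ 0 - (starRingEnd ℂ) (ψ 1) * ψ 1] with hρ
  have hρsq : ρ 0 ^ 2 + ρ 1 ^ 2 + ρ 2 ^ 2 = 1 := by
    simp only [hρ, Matrix.cons_val_zero, Matrix.cons_val_one, Matrix.head_cons,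
      Matrix.cons_val_two, Matrix.tail_cons]
    linear_combination ((starRingEnd ℂ) (ψ 0) * ψ 0 + (starRingEnd ℂ) (ψ 1) * ψ 1 + 1) * hψ' +
      (((starRingEnd ℂ) (ψ 0) * ψ 1 - (starRingEnd ℂ) (ψ 1) * ψ 0) ^ 2) * Complex.I_sq
  -- expectation value of J u
  have h1 : ∀ u : Fin 3 → ℝ, star ψ ⬝ᵥ (J u *ᵥ ψ) =
      ((u 0 : ℂ) * ρ 0 + (u 1 : ℂ) * ρ 1 + (u 2 : ℂ) * ρ 2) / 2 := by
    intro u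
    rw [hJ, hσx, hσy, hσz]
    simp [hρ, dotProduct, Matrix.mulVec, Fin.sum_univ_two, Matrix.add_apply,
      Matrix.smul_apply]
    ring
  -- expectation of the anticommutator
  have h2 : ∀ u v : Fin 3 → ℝ, star ψ ⬝ᵥ ((J u * J v + J v * J u) *ᵥ ψ) =
      ((u 0 : ℂ) * v 0 + (u 1 : ℂ) * v 1 + (u 2 : ℂ) * v 2) / 2 := by
    intro u v
    rw [hJ u, hJ v, hσx, hσy, hσz]
    simp [dotProduct, Matrix.mulVec, Fin.sum_univ_two, Matrix.add_apply,
      Matrix.smul_apply, Matrix.mul_apply]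
    linear_combination (((u 0 : ℂ) * v 0 + (u 1 : ℂ) * v 1 + (u 2 : ℂ) * v 2) / 2) * hψ' +
      ((-(1:ℂ)/2) * u 1 * v 1 * ((starRingEnd ℂ) (ψ 0) * ψ 0 + (starRingEnd ℂ) (ψ 1) * ψ 1)) *
        Complex.I_sq
  -- scalar multiplication commutes with J
  have hsmul : ∀ (s : ℝ) (v : Fin 3 → ℝ), ((s : ℂ) • J v) = J (s • v) := by
    intro s v
    rw [hJ, hJ]
    simp only [Pi.smul_apply, smul_eq_mul]
    push_cast
    module
  -- coefficient vectors
  set U : Fin 3 → Fin 3 → ℝ :=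
    ![(-t) • ![Real.cos θ * Real.cos φ, Real.cos θ * Real.sin φ, Real.sin θ],
      (2 * Real.sin (B * t / 2)) •
        ![Real.sin (B * t / 2) * Real.sin φ + Real.cos (B * t / 2) * Real.sin θ * Real.cos φ,
          -(Real.sin (B * t / 2) * Real.cos φ) + Real.cos (B * t / 2) * Real.sin θ * Real.sin φ,
          -(Real.cos (B * t / 2) * Real.cos θ)],
      (2 * Real.sin (B * t / 2) * Real.cos θ) •
        ![Real.cos (B * t / 2) * Real.sin φ - Real.sin (B * t / 2) * Real.sin θ * Real.cos φ,
          -(Real.cos (B * t / 2) * Real.cos φ) - Real.sin (B * t / 2) * Real.sin θ * Real.sin φ,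
          Real.sin (B * t / 2) * Real.cos θ]] with hU
  have hHU : ∀ l : Fin 3, H l = J (U l) := by
    intro l
    fin_cases l
    · show H 0 = J (U 0); rw [hH0, hsmul]; rfl
    · show H 1 = J (U 1); rw [hH1, hsmul]; rfl
    · show H 2 = J (U 2); rw [hH2, hsmul]; rfl
  -- entrywise formula for Q
  have hQ' : ∀ l l' : Fin 3, (Q l l' : ℂ) =
      ((U l 0 : ℂ) * U l' 0 + (U l 1 : ℂ) * U l' 1 + (U l 2 : ℂ) * U l' 2)
        - ((U l 0 : ℂ) * ρ 0 + (U l 1 : ℂ) * ρ 1 + (U l 2 : ℂ) * ρ 2) *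
          ((U l' 0 : ℂ) * ρ 0 + (U l' 1 : ℂ) * ρ 1 + (U l' 2 : ℂ) * ρ 2) := by
    intro l l'
    rw [hQ, hHU l, hHU l', h2, h1, h1]
    ring
  -- the complex matrices
  set Ac : Matrix (Fin 3) (Fin 3) ℂ := Matrix.of fun l i => (U l i : ℂ) with hAc
  set Pc : Matrix (Fin 3) (Fin 3) ℂ :=
    Matrix.of fun i j => (if i = j then 1 else 0) - ρ i * ρ j with hPc
  have hmap : Q.map Complex.ofRealHom = Ac * Pc * Ac.transpose := by
    ext l l'
    simp only [Matrix.map_apply, Matrix.mul_apply, Matrix.transpose_apply, Fin.sum_univ_three,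
      hAc, hPc, Matrix.of_apply, Complex.ofRealHom_eq_coe]
    rw [hQ' l l']
    fin_cases l <;> fin_cases l' <;> simp <;> ring
  have hdetP : Pc.det = 0 := by
    rw [Matrix.det_fin_three]
    simp [hPc]
    linear_combination -hρsq
  have h3 := RingHom.map_det Complex.ofRealHom Q
  rw [RingHom.mapMatrix_apply, hmap, Matrix.det_mul, Matrix.det_mul, hdetP, mul_zero, zero_mul] at h3
  rw [Complex.ofRealHom_eq_coe] at h3
  exact_mod_cast h3
end

section
/- The series ∑_{m=0}^∞ (i t B)^m / m! · ad_{J_{n_θ^{(3)}}}^m (J_{n_φ'}) converges (in any matrix norm) and satisfies ∑_{m=0}^∞ (i t B)^m / m! · ad_{J_{n_θ^{(3)}}}^m (J_{n_φ'}) − J_{n_φ'} = 2 sin(Bt/2) · J_{n₁^{(3)}}. (This gives the closed form 𝓗_θ = 2 sin(Bt/2) J_{n₁^{(3)}} for the three-parameter su(2) encoding.) -/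
/-!
For a unit vector `n` and `e ⊥ n`, `ad_{J_n}` maps `J_e ↦ i J_{n×e}` and `J_{n×e} ↦ -i J_e`
(since `n × (n × e) = -e`), so `J_e ± i J_{n×e}` are eigenvectors with eigenvalues `±1`. On them
the series is `exp(±itB)`, hence it rotates `J_e` by the angle `tB` in the plane of `J_e` and
`J_{n×e}`; finally `cos(tB) - 1 = -2 sin²(Bt/2)` and `sin(tB) = 2 sin(Bt/2) cos(Bt/2)`.
-/

open Complex Matrix

section Exponential

variable {E : Type*} [AddCommGroup E] [Module ℂ E]

theorem iterate_apply_of_apply_eq_smul (f : E →ₗ[ℂ] E) {μ : ℂ} {u : E} (hu : f u = μ • u)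
    (m : ℕ) : f^[m] u = μ ^ m • u := by
  induction m with
  | zero => simp
  | succ m ih => rw [Function.iterate_succ_apply', ih, map_smul, hu, smul_smul, pow_succ]

variable [TopologicalSpace E] [ContinuousSMul ℂ E]

theorem hasSum_exp_smul_iterate_of_apply_eq_smul (f : E →ₗ[ℂ] E) {μ : ℂ} {u : E}
    (hu : f u = μ • u) (w : ℂ) :
    HasSum (fun m : ℕ => (w ^ m / (Nat.factorial m : ℂ)) • f^[m] u) (exp (μ * w) • u) := by
  simp_rw [iterate_apply_of_apply_eq_smul f hu, smul_smul, exp_eq_exp_ℂ]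
  convert (NormedSpace.expSeries_div_hasSum_exp (μ * w)).smul_const u using 3
  ring

theorem hasSum_exp_smul_iterate_of_rotation [ContinuousAdd E] (f : E →ₗ[ℂ] E) {Y Z : E}
    (hY : f Y = I • Z) (hZ : f Z = -(I • Y)) (s : ℂ) :
    HasSum (fun m : ℕ => ((I * s) ^ m / (Nat.factorial m : ℂ)) • f^[m] Y)
      (cos s • Y - sin s • Z) := by
  have hplus : f (Y + I • Z) = (1 : ℂ) • (Y + I • Z) := by
    rw [map_add, map_smul, hY, hZ, smul_neg, smul_smul, I_mul_I]
    module
  have hminus : f (Y - I • Z) = (-1 : ℂ) • (Y - I • Z) := by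
    rw [map_sub, map_smul, hY, hZ, smul_neg, smul_smul, I_mul_I]
    module
  have hY_eq (m : ℕ) :
      f^[m] Y = (1 / 2 : ℂ) • f^[m] (Y + I • Z) + (1 / 2 : ℂ) • f^[m] (Y - I • Z) := by
    simp only [← Module.End.pow_apply, ← map_smul, ← map_add]
    congr 1
    module
  simp_rw [hY_eq, smul_add, smul_comm _ (1 / 2 : ℂ)]
  convert
    ((hasSum_exp_smul_iterate_of_apply_eq_smul f hplus (I * s)).const_smul (1 / 2 : ℂ)).add
      ((hasSum_exp_smul_iterate_of_apply_eq_smul f hminus (I * s)).const_smul (1 / 2 : ℂ))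
    using 1
  rw [cos, sin, one_mul, neg_one_mul, mul_comm I s, ← neg_mul]
  match_scalars <;> ring

end Exponential

section Su2Comb

def su2Comb {L : Type*} [AddCommGroup L] [Module ℂ L] (Jx Jy Jz : L) (v : Fin 3 → ℝ) : L :=
  (v 0 : ℂ) • Jx + (v 1 : ℂ) • Jy + (v 2 : ℂ) • Jz

variable {L : Type*} [AddCommGroup L] [Module ℂ L] {Jx Jy Jz : L}

theorem su2Comb_neg (v : Fin 3 → ℝ) : su2Comb Jx Jy Jz (-v) = -su2Comb Jx Jy Jz v := by
  simp only [su2Comb, Pi.neg_apply, ofReal_neg, neg_smul]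
  abel

theorem su2Comb_smul_add_smul (a b : ℝ) (u v : Fin 3 → ℝ) :
    su2Comb Jx Jy Jz (a • u + b • v) =
      (a : ℂ) • su2Comb Jx Jy Jz u + (b : ℂ) • su2Comb Jx Jy Jz v := by
  simp only [su2Comb, Pi.add_apply, Pi.smul_apply, smul_eq_mul]
  push_cast
  module

end Su2Comb

section Su2Lie

variable {L : Type*} [LieRing L] [LieAlgebra ℂ L] {Jx Jy Jz : L}

theorem lie_su2Comb (hxy : ⁅Jx, Jy⁆ = I • Jz) (hyz : ⁅Jy, Jz⁆ = I • Jx)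
    (hzx : ⁅Jz, Jx⁆ = I • Jy) (a b : Fin 3 → ℝ) :
    ⁅su2Comb Jx Jy Jz a, su2Comb Jx Jy Jz b⁆ = I • su2Comb Jx Jy Jz (a ⨯₃ b) := by
  have hyx : ⁅Jy, Jx⁆ = -(I • Jz) := by rw [← lie_skew, hxy]
  have hzy : ⁅Jz, Jy⁆ = -(I • Jx) := by rw [← lie_skew, hyz]
  have hxz : ⁅Jx, Jz⁆ = -(I • Jy) := by rw [← lie_skew, hzx]
  simp only [su2Comb, cross_apply, add_lie, lie_add, smul_lie, lie_smul, lie_self, hxy, hyz,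
    hzx, hyx, hzy, hxz, cons_val_zero, cons_val_one, cons_val_two, head_cons, tail_cons]
  push_cast
  module

theorem lie_su2Comb_cross_cross (hxy : ⁅Jx, Jy⁆ = I • Jz) (hyz : ⁅Jy, Jz⁆ = I • Jx)
    (hzx : ⁅Jz, Jx⁆ = I • Jy) {n e : Fin 3 → ℝ} (hn : n ⬝ᵥ n = 1) (hne : n ⬝ᵥ e = 0) :
    ⁅su2Comb Jx Jy Jz n, su2Comb Jx Jy Jz (n ⨯₃ e)⁆ = -(I • su2Comb Jx Jy Jz e) := by
  rw [lie_su2Comb hxy hyz hzx, cross_cross_eq_smul_sub_smul', hne, hn, zero_smul, one_smul,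
    zero_sub, su2Comb_neg, smul_neg]

theorem hasSum_exp_smul_iterate_ad_su2Comb [TopologicalSpace L] [ContinuousAdd L]
    [ContinuousSMul ℂ L] (hxy : ⁅Jx, Jy⁆ = I • Jz) (hyz : ⁅Jy, Jz⁆ = I • Jx)
    (hzx : ⁅Jz, Jx⁆ = I • Jy) {n e : Fin 3 → ℝ} (hn : n ⬝ᵥ n = 1) (hne : n ⬝ᵥ e = 0) (s : ℂ) :
    HasSum
      (fun m : ℕ => ((I * s) ^ m / (Nat.factorial m : ℂ)) •
        (LieAlgebra.ad ℂ L (su2Comb Jx Jy Jz n))^[m] (su2Comb Jx Jy Jz e))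
      (cos s • su2Comb Jx Jy Jz e - sin s • su2Comb Jx Jy Jz (n ⨯₃ e)) :=
  hasSum_exp_smul_iterate_of_rotation _ (lie_su2Comb hxy hyz hzx n e)
    (lie_su2Comb_cross_cross hxy hyz hzx hn hne) s

end Su2Lie

section SphericalFrame

variable (θ φ : ℝ)

theorem sphericalUnit_dotProduct_self :
    ![Real.cos θ * Real.cos φ, Real.cos θ * Real.sin φ, Real.sin θ] ⬝ᵥ
      ![Real.cos θ * Real.cos φ, Real.cos θ * Real.sin φ, Real.sin θ] = 1 := by
  simp only [vec3_dotProduct, cons_val_zero, cons_val_one, cons_val_two, head_cons, tail_cons]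
  linear_combination Real.cos θ ^ 2 * Real.sin_sq_add_cos_sq φ + Real.sin_sq_add_cos_sq θ

theorem sphericalUnit_dotProduct_azimuthal :
    ![Real.cos θ * Real.cos φ, Real.cos θ * Real.sin φ, Real.sin θ] ⬝ᵥ
      ![-Real.sin φ, Real.cos φ, 0] = 0 := by
  simp only [vec3_dotProduct, cons_val_zero, cons_val_one, cons_val_two, head_cons, tail_cons]
  ring

theorem sphericalUnit_cross_azimuthal :
    ![Real.cos θ * Real.cos φ, Real.cos θ * Real.sin φ, Real.sin θ] ⨯₃
      ![-Real.sin φ, Real.cos φ, 0] =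
      ![-(Real.sin θ * Real.cos φ), -(Real.sin θ * Real.sin φ), Real.cos θ] := by
  rw [cross_apply]
  ext i
  fin_cases i <;> simp only [Fin.zero_eta, Fin.mk_one, Fin.reduceFinMk, cons_val_zero,
    cons_val_one, cons_val_two, head_cons, tail_cons]
  · ring
  · ring
  · linear_combination Real.cos θ * Real.sin_sq_add_cos_sq φ

end SphericalFrame

attribute [local instance] LieRing.ofAssociativeRing LieAlgebra.ofAssociativeAlgebra

theorem su2_H_theta_three_param_general
    (N : ℕ)
    (Jx Jy Jz : Matrix (Fin N) (Fin N) ℂ)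
    (hxy : Jx * Jy - Jy * Jx = Complex.I • Jz)
    (hyz : Jy * Jz - Jz * Jy = Complex.I • Jx)
    (hzx : Jz * Jx - Jx * Jz = Complex.I • Jy)
    (J : (Fin 3 → ℝ) → Matrix (Fin N) (Fin N) ℂ)
    (hJ : ∀ v : Fin 3 → ℝ, J v = (v 0 : ℂ) • Jx + (v 1 : ℂ) • Jy + (v 2 : ℂ) • Jz)
    (B θ φ t : ℝ)
    (nθ3 nφ' n₁3 : Fin 3 → ℝ)
    (hnθ3 : nθ3 = ![Real.cos θ * Real.cos φ, Real.cos θ * Real.sin φ, Real.sin θ])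
    (hnφ' : nφ' = ![-Real.sin φ, Real.cos φ, 0])
    (hn₁3 : n₁3 =
      ![Real.sin (B * t / 2) * Real.sin φ + Real.cos (B * t / 2) * Real.sin θ * Real.cos φ,
        -(Real.sin (B * t / 2) * Real.cos φ) + Real.cos (B * t / 2) * Real.sin θ * Real.sin φ,
        -(Real.cos (B * t / 2) * Real.cos θ)]) :
    ∃ S : Matrix (Fin N) (Fin N) ℂ,
      HasSum
        (fun m : ℕ =>
          ((Complex.I * (t : ℂ) * (B : ℂ)) ^ m / (Nat.factorial m : ℂ)) •
            (fun X => J nθ3 * X - X * J nθ3)^[m] (J nφ'))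
        S
      ∧ S - J nφ' = ((2 * Real.sin (B * t / 2) : ℝ) : ℂ) • J n₁3 := by
  obtain rfl : J = su2Comb Jx Jy Jz := funext hJ
  subst hnθ3 hnφ' hn₁3
  rw [← Ring.lie_def] at hxy hyz hzx
  have hsum := hasSum_exp_smul_iterate_ad_su2Comb hxy hyz hzx
    (sphericalUnit_dotProduct_self θ φ) (sphericalUnit_dotProduct_azimuthal θ φ) ((t : ℂ) * B)
  have had (A : Matrix (Fin N) (Fin N) ℂ) : ⇑(LieAlgebra.ad ℂ _ A) = fun X => A * X - X * A :=
    funext fun X => by rw [LieAlgebra.ad_apply, Ring.lie_def]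
  rw [had, ← mul_assoc] at hsum
  refine ⟨_, hsum, ?_⟩
  set c := B * t / 2
  have hn₁ : ![Real.sin c * Real.sin φ + Real.cos c * Real.sin θ * Real.cos φ,
      -(Real.sin c * Real.cos φ) + Real.cos c * Real.sin θ * Real.sin φ,
      -(Real.cos c * Real.cos θ)] =
      (-Real.sin c) • ![-Real.sin φ, Real.cos φ, 0] +
        (-Real.cos c) • ![-(Real.sin θ * Real.cos φ), -(Real.sin θ * Real.sin φ), Real.cos θ] := by
    ext i
    fin_cases i <;> simp only [Fin.zero_eta, Fin.mk_one, Fin.reduceFinMk, cons_val_zero,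
      cons_val_one, cons_val_two, head_cons, tail_cons, Pi.add_apply, Pi.smul_apply, smul_eq_mul]
      <;> ring
  rw [hn₁, su2Comb_smul_add_smul, sphericalUnit_cross_azimuthal,
    show (t : ℂ) * B = 2 * (c : ℂ) by push_cast [c]; ring]
  push_cast
  rw [cos_two_mul, sin_two_mul]
  match_scalars
  · linear_combination 2 * sin_sq_add_cos_sq (c : ℂ)
  · ring

/-- The series `∑ (itB)^m/m! • ad_{J_{n_θ³}}^m (J_{n_φ'})` converges, and its sum minus
`J_{n_φ'}` equals `2 sin(Bt/2) • J_{n₁³}`: the closed form for `𝓗_θ` of the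
three-parameter su(2) encoding. -/
theorem su2_H_theta_three_param
    (N : ℕ) (hN : 0 < N)
    (Jx Jy Jz : Matrix (Fin N) (Fin N) ℂ)
    (hxy : Jx * Jy - Jy * Jx = Complex.I • Jz)
    (hyz : Jy * Jz - Jz * Jy = Complex.I • Jx)
    (hzx : Jz * Jx - Jx * Jz = Complex.I • Jy)
    (J : (Fin 3 → ℝ) → Matrix (Fin N) (Fin N) ℂ)
    (hJ : ∀ v : Fin 3 → ℝ, J v = (v 0 : ℂ) • Jx + (v 1 : ℂ) • Jy + (v 2 : ℂ) • Jz)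
    (B θ φ t : ℝ)
    (nθ3 nφ' n₁3 : Fin 3 → ℝ)
    (hnθ3 : nθ3 = ![Real.cos θ * Real.cos φ, Real.cos θ * Real.sin φ, Real.sin θ])
    (hnφ' : nφ' = ![-Real.sin φ, Real.cos φ, 0])
    (hn₁3 : n₁3 =
      ![Real.sin (B * t / 2) * Real.sin φ + Real.cos (B * t / 2) * Real.sin θ * Real.cos φ,
        -(Real.sin (B * t / 2) * Real.cos φ) + Real.cos (B * t / 2) * Real.sin θ * Real.sin φ,
        -(Real.cos (B * t / 2) * Real.cos θ)]) :
    ∃ S : Matrix (Fin N) (Fin N) ℂ,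
      HasSum
        (fun m : ℕ =>
          ((Complex.I * (t : ℂ) * (B : ℂ)) ^ m / (Nat.factorial m : ℂ)) •
            (fun X => J nθ3 * X - X * J nθ3)^[m] (J nφ'))
        S
      ∧ S - J nφ' = ((2 * Real.sin (B * t / 2) : ℝ) : ℂ) • J n₁3 :=
  su2_H_theta_three_param_general N Jx Jy Jz hxy hyz hzx J hJ B θ φ t nθ3 nφ' n₁3 hnθ3 hnφ' hn₁3
end

section
/- For the spin-s probe state |ψ₀⟩ = cos α |s⟩ + e^{iφ} sin α |−s⟩ with N = 2s+1 ≥ 4, the quantum Fisher information matrix entries of the two-parameter su(2) model satisfy: Q_BB = 4t²(⟨J_{n_θ}²⟩₀ − ⟨J_{n_θ}⟩₀²) = (N−1) t² [cos²θ + (N−1) sin²(2α) sin²θ], and Q_θθ = 16 sin²(Bt/2)(⟨J_{n₁}²⟩₀ − ⟨J_{n₁}⟩₀²) = 4(N−1)[sin⁴(Bt/2) + sin²(Bt/2)cos²(Bt/2)((N−1) cos²θ sin²(2α) + sin²θ)]. -/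
open Matrix
open scoped BigOperators

lemma sum_two' {N : ℕ} (f : Fin N → ℂ) (i j : Fin N) (hij : i ≠ j)
    (h : ∀ k, k ≠ i → k ≠ j → f k = 0) : ∑ k, f k = f i + f j := by
  rw [← Finset.sum_subset (Finset.subset_univ {i, j})
    (fun x _ hx => by
      simp only [Finset.mem_insert, Finset.mem_singleton, not_or] at hx
      exact h x hx.1 hx.2)]
  rw [Finset.sum_pair hij]

set_option maxHeartbeats 2000000 in
lemma variance_aux
    (N : ℕ) (hN : 4 ≤ N)
    (s : ℝ) (hs : s = ((N : ℝ) - 1) / 2)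
    (Jz Jp Jm Jx Jy : Matrix (Fin N) (Fin N) ℂ)
    (hJz : Jz = Matrix.diagonal fun k : Fin N => ((s - (k : ℕ) : ℝ) : ℂ))
    (hJp : ∀ i j : Fin N, Jp i j =
      if (i : ℕ) + 1 = (j : ℕ)
      then ((Real.sqrt (s * (s + 1) - (s - (j : ℕ)) * ((s - (j : ℕ)) + 1)) : ℝ) : ℂ)
      else 0)
    (hJm : ∀ i j : Fin N, Jm i j =
      if (j : ℕ) + 1 = (i : ℕ)
      then ((Real.sqrt (s * (s + 1) - (s - (j : ℕ)) * ((s - (j : ℕ)) - 1)) : ℝ) : ℂ)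
      else 0)
    (hJx : Jx = (2 : ℂ)⁻¹ • (Jp + Jm))
    (hJy : Jy = (2 * Complex.I)⁻¹ • (Jp - Jm))
    (α φ : ℝ)
    (ψ₀ : Fin N → ℂ)
    (hψ₀ : ∀ k : Fin N, ψ₀ k =
      if (k : ℕ) = 0 then ((Real.cos α : ℝ) : ℂ)
      else if (k : ℕ) = N - 1 then Complex.exp (Complex.I * (φ : ℂ)) * (Real.sin α : ℂ)
      else 0)
    (J : (Fin 3 → ℝ) → Matrix (Fin N) (Fin N) ℂ)
    (hJ : ∀ v : Fin 3 → ℝ, J v = (v 0 : ℂ) • Jx + (v 1 : ℂ) • Jy + (v 2 : ℂ) • Jz)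
    (v : Fin 3 → ℝ) :
    star ψ₀ ⬝ᵥ ((J v * J v) *ᵥ ψ₀) - (star ψ₀ ⬝ᵥ (J v *ᵥ ψ₀)) ^ 2
      = (((v 2)^2 * s^2 * Real.sin (2*α)^2 + ((v 0)^2 + (v 1)^2) * s / 2 : ℝ) : ℂ) := by
  have hNR : (4:ℝ) ≤ (N:ℝ) := by exact_mod_cast hN
  have hs0 : 0 ≤ 2 * s := by rw [hs]; linarith
  have hcN1 : ((N - 1 : ℕ) : ℝ) = 2 * s := by
    rw [hs, Nat.cast_sub (by omega)]; push_cast; ring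
  have hcN2 : ((N - 2 : ℕ) : ℝ) = 2 * s - 1 := by
    rw [hs, Nat.cast_sub (by omega)]; push_cast; ring
  set r : ℝ := Real.sqrt (2 * s) with hrdef
  have hρ : ((r : ℝ) : ℂ) ^ 2 = 2 * (s : ℂ) := by
    rw [← Complex.ofReal_pow, Real.sq_sqrt hs0]; push_cast; ring
  -- indices
  set i0 : Fin N := ⟨0, by omega⟩ with hi0
  set i1 : Fin N := ⟨N - 1, by omega⟩ with hi1
  set i2 : Fin N := ⟨1, by omega⟩ with hi2
  set i3 : Fin N := ⟨N - 2, by omega⟩ with hi3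
  have h01 : i0 ≠ i1 := by simp [hi0, hi1, Fin.ext_iff]; omega
  have h02 : i0 ≠ i2 := by simp [hi0, hi2, Fin.ext_iff]
  have h31 : i3 ≠ i1 := by simp [hi3, hi1, Fin.ext_iff]; omega
  have hv1 : (i1:ℕ) = N - 1 := rfl
  have hv3 : (i3:ℕ) = N - 2 := rfl
  -- entry formula
  have hE : ∀ i j : Fin N, J v i j
      = (v 0 : ℂ) * (2:ℂ)⁻¹ * (Jp i j + Jm i j)
        + (v 1 : ℂ) * (-Complex.I/2) * (Jp i j - Jm i j)
        + (v 2 : ℂ) * (if i = j then ((s - (j : ℕ) : ℝ) : ℂ) else 0) := by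
    intro i j
    have h2I : ((2:ℂ) * Complex.I)⁻¹ = -Complex.I/2 := by
      field_simp; ring_nf; simp [Complex.I_sq]
    rw [hJ, hJx, hJy, hJz]
    simp only [Matrix.add_apply, Matrix.smul_apply, Matrix.diagonal_apply, Matrix.sub_apply,
      smul_eq_mul, h2I]
    by_cases h : i = j <;> simp [h] <;> ring
  obtain ⟨x, hx⟩ : ∃ x : ℂ, x = (v 0 : ℂ) * (2:ℂ)⁻¹ := ⟨_, rfl⟩
  obtain ⟨y, hy⟩ : ∃ y : ℂ, y = (v 1 : ℂ) * (-Complex.I/2) := ⟨_, rfl⟩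
  -- concrete entries
  have he00 : J v i0 i0 = (v 2 : ℂ) * (s : ℂ) := by
    rw [hE, hJp, hJm]
    simp [hi0]
  have he11 : J v i1 i1 = -((v 2 : ℂ) * (s : ℂ)) := by
    rw [hE, hJp, hJm]
    have c1 : ¬((i1:ℕ) + 1 = (i1:ℕ)) := by omega
    rw [if_neg c1, if_neg c1, if_pos rfl]
    rw [show s - ((i1:ℕ) : ℝ) = -s by
      rw [show ((i1:ℕ) : ℝ) = ((N - 1 : ℕ) : ℝ) from rfl, hcN1]; ring]
    push_cast; ring
  have he02 : J v i0 i2 = (x + y) * (r : ℂ) := by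
    rw [hE, hJp, hJm]
    have c1 : (i0:ℕ) + 1 = (i2:ℕ) := rfl
    have c2 : ¬((i2:ℕ) + 1 = (i0:ℕ)) := by simp [hi0, hi2]
    have c3 : i0 ≠ i2 := h02
    rw [if_pos c1, if_neg c2, if_neg c3]
    rw [show s * (s + 1) - (s - ((i2:ℕ):ℝ)) * ((s - ((i2:ℕ):ℝ)) + 1) = 2 * s by
      simp [hi2]; ring]
    rw [hx, hy]; ring
  have he20 : J v i2 i0 = (x - y) * (r : ℂ) := by
    rw [hE, hJp, hJm]
    have c1 : ¬((i2:ℕ) + 1 = (i0:ℕ)) := by simp [hi0, hi2]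
    have c2 : (i0:ℕ) + 1 = (i2:ℕ) := rfl
    have c3 : i2 ≠ i0 := h02.symm
    rw [if_neg c1, if_pos c2, if_neg c3]
    rw [show s * (s + 1) - (s - ((i0:ℕ):ℝ)) * ((s - ((i0:ℕ):ℝ)) - 1) = 2 * s by
      simp [hi0]; ring]
    rw [hx, hy]; ring
  have he31 : J v i3 i1 = (x + y) * (r : ℂ) := by
    rw [hE, hJp, hJm]
    have c1 : (i3:ℕ) + 1 = (i1:ℕ) := by simp [hi3, hi1]; omega
    have c2 : ¬((i1:ℕ) + 1 = (i3:ℕ)) := by simp [hi3, hi1]; omega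
    have c3 : i3 ≠ i1 := h31
    rw [if_pos c1, if_neg c2, if_neg c3]
    rw [show s * (s + 1) - (s - ((i1:ℕ):ℝ)) * ((s - ((i1:ℕ):ℝ)) + 1) = 2 * s by
      rw [show ((i1:ℕ):ℝ) = 2*s from hcN1]; ring]
    rw [hx, hy]; ring
  have he13 : J v i1 i3 = (x - y) * (r : ℂ) := by
    rw [hE, hJp, hJm]
    have c1 : ¬((i1:ℕ) + 1 = (i3:ℕ)) := by simp [hi3, hi1]; omega
    have c2 : (i3:ℕ) + 1 = (i1:ℕ) := by simp [hi3, hi1]; omega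
    have c3 : i1 ≠ i3 := h31.symm
    rw [if_neg c1, if_pos c2, if_neg c3]
    rw [show s * (s + 1) - (s - ((i3:ℕ):ℝ)) * ((s - ((i3:ℕ):ℝ)) - 1) = 2 * s by
      rw [show ((i3:ℕ):ℝ) = 2*s - 1 from hcN2]; ring]
    rw [hx, hy]; ring
  have he01 : J v i0 i1 = 0 := by
    rw [hE, hJp, hJm]
    have c1 : ¬((i0:ℕ) + 1 = (i1:ℕ)) := by simp [hi0, hi1]; omega
    have c2 : ¬((i1:ℕ) + 1 = (i0:ℕ)) := by simp [hi0, hi1]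
    rw [if_neg c1, if_neg c2, if_neg h01]
    ring
  have he10 : J v i1 i0 = 0 := by
    rw [hE, hJp, hJm]
    have c1 : ¬((i1:ℕ) + 1 = (i0:ℕ)) := by simp [hi0, hi1]
    have c2 : ¬((i0:ℕ) + 1 = (i1:ℕ)) := by simp [hi0, hi1]; omega
    rw [if_neg c1, if_neg c2, if_neg h01.symm]
    ring
  have he21 : J v i2 i1 = 0 := by
    rw [hE, hJp, hJm]
    have c1 : ¬((i2:ℕ) + 1 = (i1:ℕ)) := by simp [hi2, hi1]; omega
    have c2 : ¬((i1:ℕ) + 1 = (i2:ℕ)) := by simp [hi2, hi1]; omega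
    have c3 : i2 ≠ i1 := by simp [hi2, hi1, Fin.ext_iff]; omega
    rw [if_neg c1, if_neg c2, if_neg c3]
    ring
  have he30 : J v i3 i0 = 0 := by
    rw [hE, hJp, hJm]
    have c1 : ¬((i3:ℕ) + 1 = (i0:ℕ)) := by simp [hi3, hi0]
    have c2 : ¬((i0:ℕ) + 1 = (i3:ℕ)) := by simp [hi3, hi0]; omega
    have c3 : i3 ≠ i0 := by simp [hi3, hi0, Fin.ext_iff]; omega
    rw [if_neg c1, if_neg c2, if_neg c3]
    ring
  -- row supports
  have hrow0 : ∀ j, j ≠ i0 → j ≠ i2 → J v i0 j = 0 := by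
    intro j h1 h2
    rw [hE, hJp, hJm]
    have c1 : ¬((i0:ℕ) + 1 = (j:ℕ)) := fun h => h2 (Fin.ext (by simpa [hi2] using h.symm))
    have c2 : ¬((j:ℕ) + 1 = (i0:ℕ)) := by simp [hi0]
    have c3 : i0 ≠ j := fun h => h1 h.symm
    rw [if_neg c1, if_neg c2, if_neg c3]
    ring
  have hrow1 : ∀ j, j ≠ i3 → j ≠ i1 → J v i1 j = 0 := by
    intro j h1 h2
    rw [hE, hJp, hJm]
    have hj3 : (j:ℕ) ≠ N - 2 := fun h => h1 (Fin.ext (h.trans hv3.symm))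
    have c1 : ¬((i1:ℕ) + 1 = (j:ℕ)) := by rw [hv1]; have := j.isLt; omega
    have c2 : ¬((j:ℕ) + 1 = (i1:ℕ)) := by rw [hv1]; omega
    have c3 : i1 ≠ j := fun h => h2 h.symm
    rw [if_neg c1, if_neg c2, if_neg c3]
    ring
  -- state values
  obtain ⟨ca, hca⟩ : ∃ c : ℂ, c = ((Real.cos α : ℝ) : ℂ) := ⟨_, rfl⟩
  obtain ⟨sa, hsa⟩ : ∃ c : ℂ, c = ((Real.sin α : ℝ) : ℂ) := ⟨_, rfl⟩
  obtain ⟨E, hEdef⟩ : ∃ c : ℂ, c = Complex.exp (Complex.I * (φ : ℂ)) := ⟨_, rfl⟩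
  have ha : ψ₀ i0 = ca := by rw [hψ₀, hca]; simp [hi0]
  have hb : ψ₀ i1 = E * sa := by
    rw [hψ₀]
    have c1 : ¬((i1:ℕ) = 0) := by simp [hi1]; omega
    have c2 : (i1:ℕ) = N - 1 := rfl
    rw [if_neg c1, if_pos c2, hEdef, hsa]
  have hz : ∀ k, k ≠ i0 → k ≠ i1 → ψ₀ k = 0 := by
    intro k h1 h2
    rw [hψ₀]
    have c1 : ¬((k:ℕ) = 0) := fun h => h1 (Fin.ext (by simpa [hi0] using h))
    have c2 : ¬((k:ℕ) = N - 1) := fun h => h2 (Fin.ext (by simpa [hi1] using h))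
    rw [if_neg c1, if_neg c2]
  have hEE : (starRingEnd ℂ) E * E = 1 := by
    rw [hEdef, ← Complex.exp_conj]
    simp only [_root_.map_mul, Complex.conj_I, Complex.conj_ofReal]
    rw [show -Complex.I * (φ:ℂ) = -(Complex.I * φ) by ring, Complex.exp_neg]
    exact inv_mul_cancel₀ (Complex.exp_ne_zero _)
  -- mulVec expansions
  have hmv : ∀ (M : Matrix (Fin N) (Fin N) ℂ) (u : Fin N → ℂ) (i : Fin N),
      (M *ᵥ u) i = ∑ j, M i j * u j := by
    intro M u i; rfl
  have hdp : ∀ (u : Fin N → ℂ),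
      star ψ₀ ⬝ᵥ u = ca * u i0 + ((starRingEnd ℂ) E * sa) * u i1 := by
    intro u
    have : star ψ₀ ⬝ᵥ u = ∑ j, (starRingEnd ℂ) (ψ₀ j) * u j := rfl
    rw [this, sum_two' _ i0 i1 h01 (fun k h1 h2 => by rw [hz k h1 h2]; simp)]
    rw [ha, hb, hca, hsa]
    simp only [_root_.map_mul, Complex.conj_ofReal]
  obtain ⟨w, hwdef⟩ : ∃ w : Fin N → ℂ, w = J v *ᵥ ψ₀ := ⟨_, rfl⟩
  have hw : ∀ i, w i = J v i i0 * ca + J v i i1 * (E * sa) := by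
    intro i
    rw [hwdef, hmv, sum_two' _ i0 i1 h01 (fun k h1 h2 => by rw [hz k h1 h2, mul_zero])]
    rw [ha, hb]
  have hw0 : w i0 = (v 2 : ℂ) * s * ca := by rw [hw, he00, he01]; ring
  have hw1 : w i1 = -((v 2 : ℂ) * s) * (E * sa) := by rw [hw, he10, he11]; ring
  have hw2 : w i2 = (x - y) * (r:ℂ) * ca := by rw [hw, he20, he21]; ring
  have hw3 : w i3 = (x + y) * (r:ℂ) * (E * sa) := by rw [hw, he30, he31]; ring
  obtain ⟨K, hK⟩ : ∃ K : ℂ, K = ((v 2 : ℂ) * s)^2 + ((v 0 : ℂ)^2 + (v 1 : ℂ)^2) * ((s:ℂ)/2) := ⟨_, rfl⟩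
  have hxy : (x + y) * (x - y) * ((r:ℂ))^2 = ((v 0 : ℂ)^2 + (v 1 : ℂ)^2) * ((s:ℂ)/2) := by
    rw [hρ, hx, hy]
    linear_combination (-(v 1:ℂ)^2 * (s:ℂ) / 2) * Complex.I_sq
  have hq0 : (J v *ᵥ w) i0 = K * ca := by
    rw [hmv, sum_two' _ i0 i2 h02 (fun k h1 h2 => by rw [hrow0 k h1 h2, zero_mul])]
    rw [he00, he02, hw0, hw2, hK]
    linear_combination ca * hxy
  have hq1 : (J v *ᵥ w) i1 = K * (E * sa) := by
    rw [hmv, sum_two' _ i3 i1 h31 (fun k h1 h2 => by rw [hrow1 k h1 h2, zero_mul])]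
    rw [he13, he11, hw1, hw3, hK]
    linear_combination (E * sa) * hxy
  have hM2 : star ψ₀ ⬝ᵥ ((J v * J v) *ᵥ ψ₀) = K * (ca^2 + sa^2) := by
    rw [← Matrix.mulVec_mulVec, ← hwdef, hdp, hq0, hq1]
    linear_combination (K * sa^2) * hEE
  have hM1 : star ψ₀ ⬝ᵥ (J v *ᵥ ψ₀) = (v 2 : ℂ) * s * (ca^2 - sa^2) := by
    rw [← hwdef, hdp, hw0, hw1]
    linear_combination (-((v 2:ℂ) * s) * sa^2) * hEE
  rw [hM2, hM1]
  have hpy : sa^2 + ca^2 = 1 := by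
    rw [hsa, hca]; push_cast [← Complex.ofReal_pow]
    exact_mod_cast congrArg (Complex.ofReal) (Real.sin_sq_add_cos_sq α)
  have hsin2 : ((Real.sin (2*α) : ℝ) : ℂ) = 2 * sa * ca := by
    rw [hsa, hca, Real.sin_two_mul]; push_cast; ring
  push_cast [hsin2]
  linear_combination hK + (K - ((v 2:ℂ) * (s:ℂ))^2 * (sa^2 + ca^2 + 1)) * hpy

/-- For the spin-`s` probe `|ψ₀⟩ = cos α |s⟩ + e^{iφ} sin α |−s⟩` with `N = 2s+1 ≥ 4`,
the QFIM entries of the two-parameter su(2) model are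
`Q_BB = 4t²(⟨J_{n_θ}²⟩₀ − ⟨J_{n_θ}⟩₀²) = (N−1)t²[cos²θ + (N−1)sin²(2α)sin²θ]` and
`Q_θθ = 16 sin²(Bt/2)(⟨J_{n₁}²⟩₀ − ⟨J_{n₁}⟩₀²)
      = 4(N−1)[sin⁴(Bt/2) + sin²(Bt/2)cos²(Bt/2)((N−1)cos²θ sin²(2α) + sin²θ)]`. -/
theorem spin_probe_qfim_entries
    (N : ℕ) (hN : 4 ≤ N)
    (s : ℝ) (hs : s = ((N : ℝ) - 1) / 2)
    (Jz Jp Jm Jx Jy : Matrix (Fin N) (Fin N) ℂ)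
    (hJz : Jz = Matrix.diagonal fun k : Fin N => ((s - (k : ℕ) : ℝ) : ℂ))
    (hJp : ∀ i j : Fin N, Jp i j =
      if (i : ℕ) + 1 = (j : ℕ)
      then ((Real.sqrt (s * (s + 1) - (s - (j : ℕ)) * ((s - (j : ℕ)) + 1)) : ℝ) : ℂ)
      else 0)
    (hJm : ∀ i j : Fin N, Jm i j =
      if (j : ℕ) + 1 = (i : ℕ)
      then ((Real.sqrt (s * (s + 1) - (s - (j : ℕ)) * ((s - (j : ℕ)) - 1)) : ℝ) : ℂ)
      else 0)
    (hJx : Jx = (2 : ℂ)⁻¹ • (Jp + Jm))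
    (hJy : Jy = (2 * Complex.I)⁻¹ • (Jp - Jm))
    (α φ : ℝ)
    (ψ₀ : Fin N → ℂ)
    (hψ₀ : ∀ k : Fin N, ψ₀ k =
      if (k : ℕ) = 0 then ((Real.cos α : ℝ) : ℂ)
      else if (k : ℕ) = N - 1 then Complex.exp (Complex.I * (φ : ℂ)) * (Real.sin α : ℂ)
      else 0)
    (B θ t : ℝ)
    (J : (Fin 3 → ℝ) → Matrix (Fin N) (Fin N) ℂ)
    (hJ : ∀ v : Fin 3 → ℝ, J v = (v 0 : ℂ) • Jx + (v 1 : ℂ) • Jy + (v 2 : ℂ) • Jz)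
    (nθ n₁ : Fin 3 → ℝ)
    (hnθ : nθ = ![Real.cos θ, 0, Real.sin θ])
    (hn₁ : n₁ = ![Real.cos (B * t / 2) * Real.sin θ, -Real.sin (B * t / 2),
        -(Real.cos (B * t / 2) * Real.cos θ)]) :
    4 * (t : ℂ) ^ 2 *
        (star ψ₀ ⬝ᵥ ((J nθ * J nθ) *ᵥ ψ₀) - (star ψ₀ ⬝ᵥ (J nθ *ᵥ ψ₀)) ^ 2)
      = ((((N : ℝ) - 1) * t ^ 2 *
          (Real.cos θ ^ 2 + ((N : ℝ) - 1) * Real.sin (2 * α) ^ 2 * Real.sin θ ^ 2) : ℝ) : ℂ)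
    ∧ 16 * ((Real.sin (B * t / 2) : ℝ) : ℂ) ^ 2 *
        (star ψ₀ ⬝ᵥ ((J n₁ * J n₁) *ᵥ ψ₀) - (star ψ₀ ⬝ᵥ (J n₁ *ᵥ ψ₀)) ^ 2)
      = ((4 * ((N : ℝ) - 1) *
          (Real.sin (B * t / 2) ^ 4 +
            Real.sin (B * t / 2) ^ 2 * Real.cos (B * t / 2) ^ 2 *
              (((N : ℝ) - 1) * Real.cos θ ^ 2 * Real.sin (2 * α) ^ 2
                + Real.sin θ ^ 2)) : ℝ) : ℂ) := by
  subst hs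
  constructor
  · rw [variance_aux N hN _ rfl Jz Jp Jm Jx Jy hJz hJp hJm hJx hJy α φ ψ₀ hψ₀ J hJ nθ]
    simp only [hnθ, Matrix.cons_val_zero, Matrix.cons_val_one, Matrix.head_cons,
      Matrix.cons_val_two, Matrix.tail_cons]
    push_cast
    ring
  · rw [variance_aux N hN _ rfl Jz Jp Jm Jx Jy hJz hJp hJm hJx hJy α φ ψ₀ hψ₀ J hJ n₁]
    simp only [hn₁, Matrix.cons_val_zero, Matrix.cons_val_one, Matrix.head_cons,
      Matrix.cons_val_two, Matrix.tail_cons]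
    push_cast
    ring
end
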